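/- arXiv:2601.22366 — 3 statements merged into one kernel-verified Lean document; each statement's English description precedes it below -/
import Mathlib

section
/- Let H be a complex Hilbert space and C a bounded selfadjoint operator on H. Among all closed subspaces N of H satisfying ⟨C f, f⟩ > 0 for every nonzero f ∈ N, the spectral subspace H₊ = range E((0,∞)) has maximal Hilbert-space dimension: for any such N, dim N ≤ dim H₊. -/
/-!
`P` is injective on `N`, since a nonzero `f ∈ N ∩ ker P` would have both `re ⟪C f, f⟫ ≤ 0` and
`re ⟪C f, f⟫ > 0`. An injective bounded operator between Hilbert spaces cannot raise the Hilbert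
dimension: it sends every basis vector of the source to a vector not orthogonal to some basis
vector of the target, and by Bessel's inequality each target basis vector is reached this way
only countably often.
-/

open ContinuousLinearMap Cardinal

universe u

local notation "⟪" x ", " y "⟫" => @inner ℂ _ _ x y

section HilbertDimension

variable {𝕜 : Type*} [RCLike 𝕜]

theorem Orthonormal.countable_setOf_inner_ne_zero {E ι : Type*} [SeminormedAddCommGroup E]
    [InnerProductSpace 𝕜 E] {v : ι → E} (hv : Orthonormal 𝕜 v) (x : E) :
    {i | inner 𝕜 (v i) x ≠ 0}.Countable :=
  (hv.inner_products_summable x).countable_support.mono fun i hi => by simpa using hi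

theorem HilbertBasis.exists_inner_ne_zero {E ι : Type*} [NormedAddCommGroup E]
    [InnerProductSpace 𝕜 E] [CompleteSpace E] (b : HilbertBasis ι 𝕜 E) {x : E}
    (hx : x ≠ 0) :
    ∃ i, inner 𝕜 (b i) x ≠ 0 := by
  by_contra! h
  refine hx (b.repr.map_eq_zero_iff.mp (lp.ext (funext fun i => ?_)))
  simpa [b.repr_apply_apply] using h i

variable {X Y : Type u} [NormedAddCommGroup X] [InnerProductSpace 𝕜 X]
  [CompleteSpace X] [NormedAddCommGroup Y] [InnerProductSpace 𝕜 Y] [CompleteSpace Y]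

theorem Orthonormal.mk_le_of_injective {ι κ : Type u} {v : ι → X} (hv : Orthonormal 𝕜 v)
    (c : HilbertBasis κ 𝕜 Y) (T : X →L[𝕜] Y) (hT : Function.Injective T) : #ι ≤ #κ := by
  have hTv : ∀ i, T (v i) ≠ 0 := fun i => (map_ne_zero_iff T hT).mpr (hv.ne_zero i)
  choose F hF using fun i => c.exists_inner_ne_zero (hTv i)
  have hfiber : ∀ k, #(F ⁻¹' {k}) ≤ ℵ₀ := by
    intro k
    refine ((hv.countable_setOf_inner_ne_zero (adjoint T (c k))).mono ?_).le_aleph0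
    rintro i rfl
    rw [Set.mem_ofPred_eq, ← inner_conj_symm, adjoint_inner_left,
      map_ne_zero_iff _ (starRingEnd 𝕜).injective]
    exact hF i
  have hmul : #ι ≤ #κ * ℵ₀ := mk_le_mk_mul_of_mk_preimage_le F hfiber
  rcases finite_or_infinite κ with hκ | hκ
  · have : Fintype κ := Fintype.ofFinite κ
    calc #ι ≤ Module.rank 𝕜 X := hv.linearIndependent.cardinal_le_rank
      _ ≤ Module.rank 𝕜 Y := LinearMap.rank_le_of_injective (T : X →ₗ[𝕜] Y) hT
      _ = #κ := c.toOrthonormalBasis.toBasis.mk_eq_rank''.symm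
  · rwa [mul_eq_left (aleph0_le_mk κ) (aleph0_le_mk κ) aleph0_ne_zero] at hmul

theorem exists_linearIsometry_of_injective (T : X →L[𝕜] Y)
    (hT : Function.Injective T) : Nonempty (X →ₗᵢ[𝕜] Y) := by
  obtain ⟨wX, b, -⟩ := exists_hilbertBasis 𝕜 X
  obtain ⟨wY, c, -⟩ := exists_hilbertBasis 𝕜 Y
  obtain ⟨j⟩ : Nonempty (wX ↪ wY) := (le_def _ _).mp (b.orthonormal.mk_le_of_injective c T hT)
  have hcj : Orthonormal 𝕜 (c ∘ j) := c.orthonormal.comp j j.injective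
  exact ⟨hcj.orthogonalFamily.linearIsometry.comp b.repr.toLinearIsometry⟩

end HilbertDimension

theorem stmt1_general {H : Type*} [NormedAddCommGroup H] [InnerProductSpace ℂ H] [CompleteSpace H]
    (C : H →L[ℂ] H)
    (P : H →L[ℂ] H) (hPidem : P ∘L P = P)
    (hker : ∀ f : H, P f = 0 → (⟪C f, f⟫).re ≤ 0)
    (N : Submodule ℂ H) (hNcl : IsClosed (N : Set H))
    (hN : ∀ f ∈ N, f ≠ 0 → 0 < (⟪C f, f⟫).re) :
    Nonempty (N →ₗᵢ[ℂ] LinearMap.range (P : H →ₗ[ℂ] H)) := by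
  have : CompleteSpace N := hNcl.completeSpace_coe
  have : CompleteSpace (LinearMap.range (P : H →ₗ[ℂ] H)) :=
    (IsIdempotentElem.isClosed_range hPidem).completeSpace_coe
  refine exists_linearIsometry_of_injective
    ((P ∘L N.subtypeL).codRestrict _ fun f => LinearMap.mem_range_self _ _) ?_
  refine (injective_iff_map_eq_zero _).mpr fun f hPf => ?_
  by_contra hf
  have hPf' : P f = 0 := congrArg Subtype.val hPf
  exact (hker f hPf').not_gt (hN f f.2 (by simpa using hf))

/-- With `P` the spectral projection `E((0,∞))` of the bounded selfadjoint
operator `C` (encoded by its characteristic properties), the spectral subspace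
`H₊ = ran P` has maximal Hilbert dimension among closed `C`-strictly positive subspaces:
for any such `N`, `dim N ≤ dim H₊`, expressed by the existence of a linear isometry of
`N` into `H₊`. -/
theorem stmt1 {H : Type*} [NormedAddCommGroup H] [InnerProductSpace ℂ H] [CompleteSpace H]
    (C : H →L[ℂ] H) (hC : IsSelfAdjoint C)
    (P : H →L[ℂ] H) (hPsa : IsSelfAdjoint P) (hPidem : P ∘L P = P)
    (hPC : C ∘L P = P ∘L C)
    (hpos : ∀ f ∈ LinearMap.range (P : H →ₗ[ℂ] H), f ≠ 0 → 0 < (⟪C f, f⟫).re)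
    (hker : ∀ f : H, P f = 0 → (⟪C f, f⟫).re ≤ 0)
    (N : Submodule ℂ H) (hNcl : IsClosed (N : Set H))
    (hN : ∀ f ∈ N, f ≠ 0 → 0 < (⟪C f, f⟫).re) :
    Nonempty (N →ₗᵢ[ℂ] LinearMap.range (P : H →ₗ[ℂ] H)) :=
  stmt1_general C P hPidem hker N hNcl hN
end

section
/- Let H be a complex Hilbert space, C ∈ L(H) selfadjoint, M₊, M₋, M₀ subspaces satisfying: H = M₊ + M₋ + M₀ with M± closed C-strictly positive/negative, M₀ = ker C, each pairwise sum closed, and pairwise C-orthogonality. Then there exist bounded projections Q₊, Q₋, Q₀ ∈ L(H) with ran Q₊ = M₊, ker Q₊ = M₋ + M₀; ran Q₋ = M₋, ker Q₋ = M₊ + M₀; ran Q₀ = M₀, ker Q₀ = M₊ + M₋. -/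
open ContinuousLinearMap

local notation "⟪" x ", " y "⟫" => @inner ℂ _ _ x y

/-!
The sign conditions make the sum direct: a vector of `M₊` lying in `M₋ + M₀` is `C`-orthogonal
to itself, hence zero, and likewise `M₋ ∩ ker C = 0`. Modularity of the lattice of submodules
turns these two facts into the three complementarity statements. Each `Q` is then the algebraic
projection onto one summand along the sum of the other two; both are closed, so it is bounded by
the closed graph theorem.
-/

open Submodule

theorem isCompl_sup_of_disjoint_sup {α : Type*} [Lattice α] [BoundedOrder α] [IsModularLattice α]
    {a b c : α} (ha : Disjoint a (b ⊔ c)) (hbc : Disjoint b c) (htop : a ⊔ b ⊔ c = ⊤) :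
    IsCompl a (b ⊔ c) ∧ IsCompl b (a ⊔ c) ∧ IsCompl c (a ⊔ b) := by
  have hab : Disjoint a b := ha.mono_right le_sup_left
  have habc : IsCompl (a ⊔ b) c :=
    ⟨hbc.disjoint_sup_left_of_disjoint_sup_right ha, codisjoint_iff.2 htop⟩
  exact ⟨hab.isCompl_sup_right_of_isCompl_sup_left habc,
    hab.symm.isCompl_sup_right_of_isCompl_sup_left (sup_comm a b ▸ habc), habc.symm⟩

section COrthogonal

variable {𝕜 E : Type*} [RCLike 𝕜] [NormedAddCommGroup E] [InnerProductSpace 𝕜 E]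
  {C : E →ₗ[𝕜] E} {P N : Submodule 𝕜 E}

theorem le_comap_orthogonal_iff :
    P ≤ Nᗮ.comap C ↔ ∀ f ∈ P, ∀ g ∈ N, inner 𝕜 (C f) g = 0 :=
  forall₂_congr fun f _ => mem_orthogonal' N (C f)

theorem disjoint_of_le_comap_orthogonal
    (hP : ∀ f ∈ P, f ≠ 0 → RCLike.re (inner 𝕜 (C f) f) ≠ 0) (h : P ≤ Nᗮ.comap C) :
    Disjoint P N := by
  refine disjoint_def.2 fun f hfP hfN => by_contra fun hf => hP f hfP hf ?_
  rw [inner_left_of_mem_orthogonal hfN (h hfP), map_zero]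

theorem disjoint_ker_of_definite (hP : ∀ f ∈ P, f ≠ 0 → RCLike.re (inner 𝕜 (C f) f) ≠ 0) :
    Disjoint P (LinearMap.ker C) := by
  refine disjoint_def.2 fun f hfP hfC => by_contra fun hf => hP f hfP hf ?_
  rw [LinearMap.mem_ker.1 hfC, inner_zero_left, map_zero]

end COrthogonal

theorem stmt18_general {H : Type*} [NormedAddCommGroup H] [InnerProductSpace ℂ H] [CompleteSpace H]
    (C : H →L[ℂ] H)
    (Mp Mm M0 : Submodule ℂ H)
    (hMpcl : IsClosed (Mp : Set H)) (hMmcl : IsClosed (Mm : Set H))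
    (hspan : ∀ h : H, ∃ fp ∈ Mp, ∃ fm ∈ Mm, ∃ f0 ∈ M0, h = fp + fm + f0)
    (hpos : ∀ f ∈ Mp, f ≠ 0 → 0 < (⟪C f, f⟫).re)
    (hneg : ∀ f ∈ Mm, f ≠ 0 → (⟪C f, f⟫).re < 0)
    (hker : M0 = LinearMap.ker (C : H →ₗ[ℂ] H))
    (hclpm : IsClosed ((Mp ⊔ Mm : Submodule ℂ H) : Set H))
    (hclp0 : IsClosed ((Mp ⊔ M0 : Submodule ℂ H) : Set H))
    (hclm0 : IsClosed ((Mm ⊔ M0 : Submodule ℂ H) : Set H))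
    (hpm : ∀ f ∈ Mp, ∀ g ∈ Mm, ⟪C f, g⟫ = 0)
    (hp0 : ∀ f ∈ Mp, ∀ g ∈ M0, ⟪C f, g⟫ = 0) :
    ∃ Qp Qm Q0 : H →L[ℂ] H,
      Qp ∘L Qp = Qp ∧ Qm ∘L Qm = Qm ∧ Q0 ∘L Q0 = Q0 ∧
      LinearMap.range (Qp : H →ₗ[ℂ] H) = Mp ∧ LinearMap.ker (Qp : H →ₗ[ℂ] H) = Mm ⊔ M0 ∧
      LinearMap.range (Qm : H →ₗ[ℂ] H) = Mm ∧ LinearMap.ker (Qm : H →ₗ[ℂ] H) = Mp ⊔ M0 ∧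
      LinearMap.range (Q0 : H →ₗ[ℂ] H) = M0 ∧ LinearMap.ker (Q0 : H →ₗ[ℂ] H) = Mp ⊔ Mm := by
  have hM0cl : IsClosed (M0 : Set H) := hker ▸ C.isClosed_ker
  have htop : Mp ⊔ Mm ⊔ M0 = ⊤ := by
    refine eq_top_iff'.2 fun h => ?_
    obtain ⟨fp, hfp, fm, hfm, f0, hf0, rfl⟩ := hspan h
    exact add_mem (add_mem (mem_sup_left (mem_sup_left hfp))
      (mem_sup_left (mem_sup_right hfm))) (mem_sup_right hf0)
  have horth : Mp ≤ (Mm ⊔ M0)ᗮ.comap (C : H →ₗ[ℂ] H) := by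
    rw [← inf_orthogonal, comap_inf]
    exact le_inf (le_comap_orthogonal_iff.2 hpm) (le_comap_orthogonal_iff.2 hp0)
  have hMp : Disjoint Mp (Mm ⊔ M0) :=
    disjoint_of_le_comap_orthogonal (fun f hf hne => (hpos f hf hne).ne') horth
  have hMmM0 : Disjoint Mm M0 :=
    hker ▸ disjoint_ker_of_definite (fun f hf hne => (hneg f hf hne).ne)
  obtain ⟨hp, hm, h0⟩ := isCompl_sup_of_disjoint_sup hMp hMmM0 htop
  have hp' := hp.isTopCompl_of_isClosed hMpcl hclm0
  have hm' := hm.isTopCompl_of_isClosed hMmcl hclp0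
  have h0' := h0.isTopCompl_of_isClosed hM0cl hclpm
  exact ⟨_, _, _, isIdempotentElem_projectionL hp', isIdempotentElem_projectionL hm',
    isIdempotentElem_projectionL h0', range_projectionL hp', ker_projectionL hp',
    range_projectionL hm', ker_projectionL hm', range_projectionL h0', ker_projectionL h0'⟩

/-- If `H = M₊ + M₋ + M₀` with `M₊, M₋` closed and `C`-strictly
positive/negative, `M₀ = ker C`, each pairwise sum closed, and the subspaces pairwise
`C`-orthogonal, then there exist bounded projections `Q₊, Q₋, Q₀` with
`ran Q₊ = M₊, ker Q₊ = M₋ + M₀`; `ran Q₋ = M₋, ker Q₋ = M₊ + M₀`;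
`ran Q₀ = M₀, ker Q₀ = M₊ + M₋`. -/
theorem stmt18 {H : Type*} [NormedAddCommGroup H] [InnerProductSpace ℂ H] [CompleteSpace H]
    (C : H →L[ℂ] H) (hC : IsSelfAdjoint C)
    (Mp Mm M0 : Submodule ℂ H)
    (hMpcl : IsClosed (Mp : Set H)) (hMmcl : IsClosed (Mm : Set H))
    (hspan : ∀ h : H, ∃ fp ∈ Mp, ∃ fm ∈ Mm, ∃ f0 ∈ M0, h = fp + fm + f0)
    (hpos : ∀ f ∈ Mp, f ≠ 0 → 0 < (⟪C f, f⟫).re)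
    (hneg : ∀ f ∈ Mm, f ≠ 0 → (⟪C f, f⟫).re < 0)
    (hker : M0 = LinearMap.ker (C : H →ₗ[ℂ] H))
    (hclpm : IsClosed ((Mp ⊔ Mm : Submodule ℂ H) : Set H))
    (hclp0 : IsClosed ((Mp ⊔ M0 : Submodule ℂ H) : Set H))
    (hclm0 : IsClosed ((Mm ⊔ M0 : Submodule ℂ H) : Set H))
    (hpm : ∀ f ∈ Mp, ∀ g ∈ Mm, ⟪C f, g⟫ = 0)
    (hp0 : ∀ f ∈ Mp, ∀ g ∈ M0, ⟪C f, g⟫ = 0)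
    (hm0 : ∀ f ∈ Mm, ∀ g ∈ M0, ⟪C f, g⟫ = 0) :
    ∃ Qp Qm Q0 : H →L[ℂ] H,
      Qp ∘L Qp = Qp ∧ Qm ∘L Qm = Qm ∧ Q0 ∘L Q0 = Q0 ∧
      LinearMap.range (Qp : H →ₗ[ℂ] H) = Mp ∧ LinearMap.ker (Qp : H →ₗ[ℂ] H) = Mm ⊔ M0 ∧
      LinearMap.range (Qm : H →ₗ[ℂ] H) = Mm ∧ LinearMap.ker (Qm : H →ₗ[ℂ] H) = Mp ⊔ M0 ∧
      LinearMap.range (Q0 : H →ₗ[ℂ] H) = M0 ∧ LinearMap.ker (Q0 : H →ₗ[ℂ] H) = Mp ⊔ Mm :=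
  stmt18_general C Mp Mm M0 hMpcl hMmcl hspan hpos hneg hker hclpm hclp0 hclm0 hpm hp0
end

section
/- Let H, K be complex Hilbert spaces, D ∈ L(K) selfadjoint, Y ∈ L(K,H) boundedly invertible, and define C = (Y⁻¹)* D Y⁻¹ (equivalently D = Y* C Y), so C is selfadjoint on H. Let K₊, K₋, K₀ be the spectral subspaces of D for (0,∞), (−∞,0), {0}. Then the images M₊ = Y K₊, M₋ = Y K₋, M₀ = Y K₀ are closed, satisfy H = M₊ + M₋ + M₀ with the sum direct, M₀ = ker C, M₊ is C-strictly positive, M₋ is C-strictly negative, and the three subspaces are pairwise C-orthogonal. -/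
open ContinuousLinearMap

local notation "⟪" x ", " y "⟫" => @inner ℂ _ _ x y

/-!
Everything is transported along `Y`. The congruence identity `⟪C (Y f), Y g⟫ = ⟪D f, g⟫` turns
the `C`-form on the images into the `D`-form on `K`, where the spectral subspaces are mutually
orthogonal and `D`-invariant, hence also pairwise `D`-orthogonal; and `ker C = Y (ker D)` because
`(Y⁻¹)*` is injective.
-/

section

variable {𝕜 H K : Type*} [RCLike 𝕜]
  [NormedAddCommGroup H] [InnerProductSpace 𝕜 H] [CompleteSpace H]
  [NormedAddCommGroup K] [InnerProductSpace 𝕜 K] [CompleteSpace K]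

theorem inner_adjoint_symm_comp_comp_symm_apply_apply (Y : K ≃L[𝕜] H) (D : K →L[𝕜] K)
    (f g : K) :
    inner 𝕜 ((adjoint (Y.symm : H →L[𝕜] K) ∘L D ∘L (Y.symm : H →L[𝕜] K)) (Y f)) (Y g) =
      inner 𝕜 (D f) g := by
  simp [adjoint_inner_left]

theorem ContinuousLinearEquiv.injective_adjoint_symm (Y : K ≃L[𝕜] H) :
    Function.Injective (adjoint (Y.symm : H →L[𝕜] K)) := by
  refine Function.LeftInverse.injective (g := adjoint (Y : K →L[𝕜] H)) fun x => ?_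
  rw [← comp_apply, ← adjoint_comp]
  simp [adjoint_id]

theorem ker_adjoint_symm_comp_comp_symm (Y : K ≃L[𝕜] H) (D : K →L[𝕜] K) :
    LinearMap.ker ((adjoint (Y.symm : H →L[𝕜] K) ∘L D ∘L (Y.symm : H →L[𝕜] K) : H →L[𝕜] H)
      : H →ₗ[𝕜] H) = (LinearMap.ker (D : K →ₗ[𝕜] K)).map ((Y : K →L[𝕜] H) : K →ₗ[𝕜] H) := by
  ext x
  simp only [LinearMap.mem_ker, coe_coe, comp_apply, Y.injective_adjoint_symm.eq_iff' (map_zero _)]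
  exact ⟨fun h => ⟨Y.symm x, h, Y.apply_symm_apply x⟩, by rintro ⟨y, hy, rfl⟩; simpa using hy⟩

end

section

variable {R M N : Type*} [Semiring R] [AddCommMonoid M] [Module R M] [TopologicalSpace M]
  [AddCommMonoid N] [Module R N] [TopologicalSpace N]

theorem ContinuousLinearEquiv.isClosed_map_submodule (e : M ≃L[R] N) {S : Submodule R M} :
    IsClosed (S.map ((e : M →L[R] N) : M →ₗ[R] N) : Set N) ↔ IsClosed (S : Set M) := by
  rw [Submodule.map_coe]
  exact e.toHomeomorph.isClosed_image

theorem ContinuousLinearEquiv.forall_mem_map_submodule (e : M ≃L[R] N) {S : Submodule R M}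
    {P : N → Prop} : (∀ x ∈ S.map ((e : M →L[R] N) : M →ₗ[R] N), P x) ↔ ∀ y ∈ S, P (e y) :=
  ⟨fun h y hy => h _ ⟨y, hy, rfl⟩, by rintro h _ ⟨y, hy, rfl⟩; exact h y hy⟩

end

section

variable {𝕜 E : Type*} [RCLike 𝕜] [NormedAddCommGroup E] [InnerProductSpace 𝕜 E]

theorem eq_zero_of_add_add_eq_zero_of_inner_eq_zero {a b c : E} (hab : inner 𝕜 a b = 0)
    (hac : inner 𝕜 a c = 0) (h : a + b + c = 0) : a = 0 := by
  have : inner 𝕜 a (a + b + c) = 0 := by rw [h, inner_zero_right]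
  rwa [inner_add_right, inner_add_right, hab, hac, add_zero, add_zero, inner_self_eq_zero] at this

theorem eq_zero_of_add_add_eq_zero_of_pairwise_inner_eq_zero {a b c : E}
    (hab : inner 𝕜 a b = 0) (hac : inner 𝕜 a c = 0) (hbc : inner 𝕜 b c = 0)
    (h : a + b + c = 0) : a = 0 ∧ b = 0 ∧ c = 0 :=
  ⟨eq_zero_of_add_add_eq_zero_of_inner_eq_zero hab hac h,
    eq_zero_of_add_add_eq_zero_of_inner_eq_zero (inner_eq_zero_symm.mp hab) hbc
      (by rw [← h]; abel),
    eq_zero_of_add_add_eq_zero_of_inner_eq_zero (inner_eq_zero_symm.mp hac)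
      (inner_eq_zero_symm.mp hbc) (by rw [← h]; abel)⟩

end

theorem stmt19_general {H K : Type*}
    [NormedAddCommGroup H] [InnerProductSpace ℂ H] [CompleteSpace H]
    [NormedAddCommGroup K] [InnerProductSpace ℂ K] [CompleteSpace K]
    (D : K →L[ℂ] K)
    (Y : K ≃L[ℂ] H) (C : H →L[ℂ] H)
    (hCdef : C = (ContinuousLinearMap.adjoint ((Y.symm : H →L[ℂ] K))) ∘L D ∘L
      (Y.symm : H →L[ℂ] K))
    (Kp Km K0 : Submodule ℂ K)
    (hKpcl : IsClosed (Kp : Set K)) (hKmcl : IsClosed (Km : Set K))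
    (hKorth1 : ∀ f ∈ Kp, ∀ g ∈ Km, ⟪f, g⟫ = 0)
    (hKorth2 : ∀ f ∈ Kp, ∀ g ∈ K0, ⟪f, g⟫ = 0)
    (hKorth3 : ∀ f ∈ Km, ∀ g ∈ K0, ⟪f, g⟫ = 0)
    (hKspan : ∀ k : K, ∃ a ∈ Kp, ∃ b ∈ Km, ∃ c ∈ K0, k = a + b + c)
    (hKinv1 : ∀ f ∈ Kp, D f ∈ Kp) (hKinv2 : ∀ f ∈ Km, D f ∈ Km)
    (hK0 : K0 = LinearMap.ker (D : K →ₗ[ℂ] K))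
    (hKpos : ∀ f ∈ Kp, f ≠ 0 → 0 < (⟪D f, f⟫).re)
    (hKneg : ∀ f ∈ Km, f ≠ 0 → (⟪D f, f⟫).re < 0) :
    let Mp : Submodule ℂ H := Kp.map ((Y : K →L[ℂ] H) : K →ₗ[ℂ] H)
    let Mm : Submodule ℂ H := Km.map ((Y : K →L[ℂ] H) : K →ₗ[ℂ] H)
    let M0 : Submodule ℂ H := K0.map ((Y : K →L[ℂ] H) : K →ₗ[ℂ] H)
    IsClosed (Mp : Set H) ∧ IsClosed (Mm : Set H) ∧ IsClosed (M0 : Set H) ∧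
      (∀ h : H, ∃ a ∈ Mp, ∃ b ∈ Mm, ∃ c ∈ M0, h = a + b + c) ∧
      (∀ a ∈ Mp, ∀ b ∈ Mm, ∀ c ∈ M0, a + b + c = 0 → a = 0 ∧ b = 0 ∧ c = 0) ∧
      M0 = LinearMap.ker (C : H →ₗ[ℂ] H) ∧
      (∀ f ∈ Mp, f ≠ 0 → 0 < (⟪C f, f⟫).re) ∧
      (∀ f ∈ Mm, f ≠ 0 → (⟪C f, f⟫).re < 0) ∧
      (∀ f ∈ Mp, ∀ g ∈ Mm, ⟪C f, g⟫ = 0) ∧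
      (∀ f ∈ Mp, ∀ g ∈ M0, ⟪C f, g⟫ = 0) ∧
      (∀ f ∈ Mm, ∀ g ∈ M0, ⟪C f, g⟫ = 0) := by
  intro Mp Mm M0
  subst hCdef hK0
  have hY0 {f : K} (hf : Y f ≠ 0) : f ≠ 0 := (map_ne_zero_iff Y Y.injective).mp hf
  refine ⟨Y.isClosed_map_submodule.mpr hKpcl, Y.isClosed_map_submodule.mpr hKmcl,
    Y.isClosed_map_submodule.mpr D.isClosed_ker, fun h => ?_, ?_,
    (ker_adjoint_symm_comp_comp_symm Y D).symm, ?_, ?_, ?_, ?_, ?_⟩ <;> simp only [Mp, Mm, M0, Y.forall_mem_map_submodule]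
  · obtain ⟨a, ha, b, hb, c, hc, hsum⟩ := hKspan (Y.symm h)
    exact ⟨Y a, ⟨a, ha, rfl⟩, Y b, ⟨b, hb, rfl⟩, Y c, ⟨c, hc, rfl⟩, by
      rw [← map_add, ← map_add, ← hsum, Y.apply_symm_apply]⟩
  · intro a ha b hb c hc hsum
    rw [← map_add, ← map_add, map_eq_zero_iff Y Y.injective] at hsum
    obtain ⟨rfl, rfl, rfl⟩ := eq_zero_of_add_add_eq_zero_of_pairwise_inner_eq_zero
      (hKorth1 a ha b hb) (hKorth2 a ha c hc) (hKorth3 b hb c hc) hsum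
    exact ⟨map_zero Y, map_zero Y, map_zero Y⟩
  all_goals simp only [inner_adjoint_symm_comp_comp_symm_apply_apply]
  · exact fun f hf hne => hKpos f hf (hY0 hne)
  · exact fun f hf hne => hKneg f hf (hY0 hne)
  · exact fun f hf g hg => hKorth1 (D f) (hKinv1 f hf) g hg
  · exact fun f hf g hg => hKorth2 (D f) (hKinv1 f hf) g hg
  · exact fun f hf g hg => hKorth3 (D f) (hKinv2 f hf) g hg

/-- Let `D` be bounded selfadjoint on `K`, `Y : K → H` boundedly invertible,
and `C = (Y⁻¹)* D Y⁻¹` (so `D = Y* C Y`).  If `K₊, K₋, K₀` are the spectral subspaces of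
`D` for `(0,∞)`, `(−∞,0)`, `{0}` (encoded by their characteristic properties), then the
images `M₊ = Y K₊`, `M₋ = Y K₋`, `M₀ = Y K₀` are closed, `H = M₊ + M₋ + M₀` with the sum
direct, `M₀ = ker C`, `M₊` is `C`-strictly positive, `M₋` is `C`-strictly negative, and the
three subspaces are pairwise `C`-orthogonal. -/
theorem stmt19 {H K : Type*}
    [NormedAddCommGroup H] [InnerProductSpace ℂ H] [CompleteSpace H]
    [NormedAddCommGroup K] [InnerProductSpace ℂ K] [CompleteSpace K]
    (D : K →L[ℂ] K) (hD : IsSelfAdjoint D)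
    (Y : K ≃L[ℂ] H) (C : H →L[ℂ] H)
    (hCdef : C = (ContinuousLinearMap.adjoint ((Y.symm : H →L[ℂ] K))) ∘L D ∘L
      (Y.symm : H →L[ℂ] K))
    (Kp Km K0 : Submodule ℂ K)
    (hKpcl : IsClosed (Kp : Set K)) (hKmcl : IsClosed (Km : Set K))
    (hKorth1 : ∀ f ∈ Kp, ∀ g ∈ Km, ⟪f, g⟫ = 0)
    (hKorth2 : ∀ f ∈ Kp, ∀ g ∈ K0, ⟪f, g⟫ = 0)
    (hKorth3 : ∀ f ∈ Km, ∀ g ∈ K0, ⟪f, g⟫ = 0)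
    (hKspan : ∀ k : K, ∃ a ∈ Kp, ∃ b ∈ Km, ∃ c ∈ K0, k = a + b + c)
    (hKinv1 : ∀ f ∈ Kp, D f ∈ Kp) (hKinv2 : ∀ f ∈ Km, D f ∈ Km)
    (hK0 : K0 = LinearMap.ker (D : K →ₗ[ℂ] K))
    (hKpos : ∀ f ∈ Kp, f ≠ 0 → 0 < (⟪D f, f⟫).re)
    (hKneg : ∀ f ∈ Km, f ≠ 0 → (⟪D f, f⟫).re < 0) :
    let Mp : Submodule ℂ H := Kp.map ((Y : K →L[ℂ] H) : K →ₗ[ℂ] H)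
    let Mm : Submodule ℂ H := Km.map ((Y : K →L[ℂ] H) : K →ₗ[ℂ] H)
    let M0 : Submodule ℂ H := K0.map ((Y : K →L[ℂ] H) : K →ₗ[ℂ] H)
    IsClosed (Mp : Set H) ∧ IsClosed (Mm : Set H) ∧ IsClosed (M0 : Set H) ∧
      (∀ h : H, ∃ a ∈ Mp, ∃ b ∈ Mm, ∃ c ∈ M0, h = a + b + c) ∧
      (∀ a ∈ Mp, ∀ b ∈ Mm, ∀ c ∈ M0, a + b + c = 0 → a = 0 ∧ b = 0 ∧ c = 0) ∧
      M0 = LinearMap.ker (C : H →ₗ[ℂ] H) ∧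
      (∀ f ∈ Mp, f ≠ 0 → 0 < (⟪C f, f⟫).re) ∧
      (∀ f ∈ Mm, f ≠ 0 → (⟪C f, f⟫).re < 0) ∧
      (∀ f ∈ Mp, ∀ g ∈ Mm, ⟪C f, g⟫ = 0) ∧
      (∀ f ∈ Mp, ∀ g ∈ M0, ⟪C f, g⟫ = 0) ∧
      (∀ f ∈ Mm, ∀ g ∈ M0, ⟪C f, g⟫ = 0) :=
  stmt19_general D Y C hCdef Kp Km K0 hKpcl hKmcl hKorth1 hKorth2 hKorth3 hKspan hKinv1 hKinv2 hK0
    hKpos hKneg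
end
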